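/- arXiv:1806.00569 — 2 statements merged into one kernel-verified Lean document; each statement's English description precedes it below -/
import Mathlib

section
/- Equation (5) (the ξ_i-derivative of a scaled power-series function belongs to the native space). Let c ∈ H, ξ ∈ [0,1]^d, and i ∈ Fin d with ξ i < 1. Then D_i(ξ)c ∈ H, i.e. ∑_{α : w α > 0} (α!)²·((D_i(ξ)c) α)²/(w α) < ∞, and for every x ∈ (−1,1)^d the function t ↦ ∑_α (c α)·t^{α i}·( ∏_{j≠i} (ξ j)^{α j} )·x^α, defined for t ∈ [0,1), is differentiable at t = ξ i with derivative ∑_α (D_i(ξ)c) α · x^α. -/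
open MeasureTheory Filter Topology

noncomputable section

/-- Factorial `α!` of a multi-index `α : Fin d → ℕ`. -/
def mfact {d : ℕ} (α : Fin d → ℕ) : ℝ := ∏ i, (Nat.factorial (α i) : ℝ)

/-- Membership in the native space `H` of the power series kernel with weights `w`:
the coefficients vanish where the weights do, and the weighted square sum is finite. -/
def memH {d : ℕ} (w : (Fin d → ℕ) → ℝ) (c : (Fin d → ℕ) → ℝ) : Prop :=
  (∀ α, w α = 0 → c α = 0) ∧
    Summable (fun α : Fin d → ℕ => mfact α ^ 2 * c α ^ 2 / w α)

/-- Inner product `⟨c, c'⟩` on the native space (terms with `w α = 0` vanish since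
division by zero is zero). -/
def innerH {d : ℕ} (w : (Fin d → ℕ) → ℝ) (c c' : (Fin d → ℕ) → ℝ) : ℝ :=
  ∑' α : Fin d → ℕ, mfact α ^ 2 * c α * c' α / w α

/-- Norm on the native space. -/
def normH {d : ℕ} (w : (Fin d → ℕ) → ℝ) (c : (Fin d → ℕ) → ℝ) : ℝ :=
  Real.sqrt (innerH w c c)

/-- The scaling operator `S_ξ`, `(S_ξ c) α = ξ^α · c α`. -/
def Sscale {d : ℕ} (ξ : Fin d → ℝ) (c : (Fin d → ℕ) → ℝ) : (Fin d → ℕ) → ℝ :=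
  fun α => (∏ i, ξ i ^ α i) * c α

/-- The scaling-derivative sequence `D_i(ξ) c`,
`(D_i(ξ)c) α = (α i)·(ξ i)^(α i − 1)·(∏_{j≠i} (ξ j)^(α j))·(c α)`
(the factor is `0` when `α i = 0`, as enforced by the factor `(α i : ℝ)`). -/
def Dscale {d : ℕ} (i : Fin d) (ξ : Fin d → ℝ) (c : (Fin d → ℕ) → ℝ) : (Fin d → ℕ) → ℝ :=
  fun α => (α i : ℝ) * ξ i ^ (α i - 1) * (∏ j ∈ Finset.univ.erase i, ξ j ^ α j) * c α

/-- A bounded linear operator on the native space: maps `H` to `H`, is linear on `H`,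
and is bounded on `H`. -/
def IsBoundedOpH {d : ℕ} (w : (Fin d → ℕ) → ℝ)
    (A : ((Fin d → ℕ) → ℝ) → ((Fin d → ℕ) → ℝ)) : Prop :=
  (∀ c, memH w c → memH w (A c)) ∧
  (∀ (a : ℝ) (c c' : (Fin d → ℕ) → ℝ), memH w c → memH w c' →
      A (a • c + c') = a • A c + A c') ∧
  (∃ M : ℝ, 0 ≤ M ∧ ∀ c, memH w c → normH w (A c) ≤ M * normH w c)

/-- Operator norm on the native space: the least bound constant. -/
def opNormH {d : ℕ} (w : (Fin d → ℕ) → ℝ)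
    (A : ((Fin d → ℕ) → ℝ) → ((Fin d → ℕ) → ℝ)) : ℝ :=
  sInf {M : ℝ | 0 ≤ M ∧ ∀ c, memH w c → normH w (A c) ≤ M * normH w c}

/-- The quadratic loss `Q_{A,g}(ξ; c) = ½⟨S_ξ c, A (S_ξ c)⟩ − ⟨g, S_ξ c⟩`. -/
def quadLoss {d : ℕ} (w : (Fin d → ℕ) → ℝ)
    (A : ((Fin d → ℕ) → ℝ) → ((Fin d → ℕ) → ℝ)) (g : (Fin d → ℕ) → ℝ)
    (ξ : Fin d → ℝ) (c : (Fin d → ℕ) → ℝ) : ℝ :=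
  (1/2) * innerH w (Sscale ξ c) (A (Sscale ξ c)) - innerH w g (Sscale ξ c)

/-- The ξ_i-derivative of the quadratic loss:
`½⟨D_i(ξ)c, A(S_ξ c)⟩ + ½⟨S_ξ c, A(D_i(ξ)c)⟩ − ⟨g, D_i(ξ)c⟩`. -/
def quadLossDeriv {d : ℕ} (w : (Fin d → ℕ) → ℝ)
    (A : ((Fin d → ℕ) → ℝ) → ((Fin d → ℕ) → ℝ)) (g : (Fin d → ℕ) → ℝ)
    (i : Fin d) (ξ : Fin d → ℝ) (c : (Fin d → ℕ) → ℝ) : ℝ :=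
  (1/2) * innerH w (Dscale i ξ c) (A (Sscale ξ c))
    + (1/2) * innerH w (Sscale ξ c) (A (Dscale i ξ c))
    - innerH w g (Dscale i ξ c)

/-- The function represented by a coefficient sequence: `f_c(x) = ∑_α (c α)·x^α`. -/
def evalF {d : ℕ} (c : (Fin d → ℕ) → ℝ) (x : Fin d → ℝ) : ℝ :=
  ∑' α : Fin d → ℕ, c α * ∏ i, x i ^ α i

/-- Sup norm of the represented function on a set `Z`. -/
def supNormOn {d : ℕ} (Z : Set (Fin d → ℝ)) (c : (Fin d → ℕ) → ℝ) : ℝ :=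
  ⨆ z : Z, |evalF c (z : Fin d → ℝ)|

/-!
`D_i(ξ)c` is `c` multiplied by the sequence `α ↦ (α i) ξ_i^(α i - 1) ∏_{j ≠ i} ξ_j^(α j)`, which
is bounded by `(1 - ξ_i)⁻¹` because `n r^(n-1) ≤ 1 + r + ⋯ + r^(n-1)`; bounded multipliers
preserve `H`. Cauchy–Schwarz against `∑ w α / (α!)² < ∞` makes every `c ∈ H` absolutely
summable, so in the variable `t` the function is a power series `∑ a_α t^(α i)` with
absolutely summable coefficients, which may be differentiated termwise on `|t| < 1`.
-/

lemma natCast_mul_pow_pred_le {r : ℝ} (hr0 : 0 ≤ r) (hr1 : r < 1) (n : ℕ) :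
    (n : ℝ) * r ^ (n - 1) ≤ (1 - r)⁻¹ :=
  calc (n : ℝ) * r ^ (n - 1) = ∑ _m ∈ Finset.range n, r ^ (n - 1) := by simp
    _ ≤ ∑ m ∈ Finset.range n, r ^ m := Finset.sum_le_sum fun m hm =>
        pow_le_pow_of_le_one hr0 hr1.le (by have := Finset.mem_range.1 hm; omega)
    _ ≤ ∑' m, r ^ m :=
        (summable_geometric_of_lt_one hr0 hr1).sum_le_tsum _ fun m _ => pow_nonneg hr0 m
    _ = (1 - r)⁻¹ := tsum_geometric_of_lt_one hr0 hr1

lemma abs_natCast_mul_pow_pred_le {r t : ℝ} (hr1 : r < 1) (ht : |t| ≤ r) (n : ℕ) :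
    |(n : ℝ) * t ^ (n - 1)| ≤ (1 - r)⁻¹ := by
  rw [abs_mul, Nat.abs_cast, abs_pow]
  exact (mul_le_mul_of_nonneg_left (pow_le_pow_left₀ (abs_nonneg t) ht _) n.cast_nonneg).trans
    (natCast_mul_pow_pred_le ((abs_nonneg t).trans ht) hr1 n)

lemma abs_prod_pow_le_one {ι : Type*} (s : Finset ι) {y : ι → ℝ} (k : ι → ℕ)
    (hy : ∀ j ∈ s, |y j| ≤ 1) : |∏ j ∈ s, y j ^ k j| ≤ 1 := by
  rw [Finset.abs_prod]
  exact Finset.prod_le_one (fun j _ => abs_nonneg _) fun j hj => by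
    rw [abs_pow]; exact pow_le_one₀ (abs_nonneg _) (hy j hj)

lemma hasDerivAt_tsum_mul_pow {ι : Type*} {a : ι → ℝ} (n : ι → ℕ)
    (ha : Summable fun k => |a k|) {s : ℝ} (hs : |s| < 1) :
    HasDerivAt (fun t => ∑' k, a k * t ^ n k) (∑' k, a k * ((n k : ℝ) * s ^ (n k - 1))) s := by
  set r := (|s| + 1) / 2 with hr
  have hr1 : r < 1 := by linarith
  have hsr : s ∈ Set.Ioo (-r) r := abs_lt.1 (by linarith)
  refine hasDerivAt_tsum_of_isPreconnected (ha.mul_left (1 - r)⁻¹) isOpen_Ioo isPreconnected_Ioo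
    (fun k t _ => (hasDerivAt_pow (n k) t).const_mul (a k)) (fun k t ht => ?_) hsr ?_ hsr
  · rw [norm_mul, Real.norm_eq_abs, Real.norm_eq_abs, mul_comm]
    exact mul_le_mul_of_nonneg_right
      (abs_natCast_mul_pow_pred_le hr1 (abs_le.2 ⟨ht.1.le, ht.2.le⟩) _) (abs_nonneg _)
  · refine ha.of_norm_bounded fun k => ?_
    rw [norm_mul, Real.norm_eq_abs, norm_pow, Real.norm_eq_abs]
    exact mul_le_of_le_one_right (abs_nonneg _) (pow_le_one₀ (abs_nonneg s) hs.le)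

lemma mfact_pos {d : ℕ} (α : Fin d → ℕ) : 0 < mfact α :=
  Finset.prod_pos fun i _ => by positivity

lemma memH.mul_left_of_abs_le {d : ℕ} {w c b : (Fin d → ℕ) → ℝ} {C : ℝ} (hw : ∀ α, 0 ≤ w α)
    (hc : memH w c) (hb : ∀ α, |b α| ≤ C) : memH w fun α => b α * c α := by
  refine ⟨fun α h => by simp [hc.1 α h], ?_⟩
  refine (hc.2.mul_left (C ^ 2)).of_nonneg_of_le (fun α => by have := hw α; positivity)
    fun α => ?_
  rw [mul_pow, mul_left_comm, mul_div_assoc]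
  exact mul_le_mul_of_nonneg_right (sq_le_sq' (abs_le.1 (hb α)).1 (abs_le.1 (hb α)).2)
    (by have := hw α; positivity)

lemma summable_abs_of_memH {d : ℕ} {w c : (Fin d → ℕ) → ℝ} (hw : ∀ α, 0 ≤ w α)
    (hwsum : Summable fun α : Fin d → ℕ => w α / mfact α ^ 2) (hc : memH w c) :
    Summable fun α : Fin d → ℕ => |c α| := by
  refine ((hc.2.add hwsum).div_const 2).of_nonneg_of_le (fun α => abs_nonneg _) fun α => ?_
  rcases (hw α).eq_or_lt with h0 | hpos
  · simp [← h0, hc.1 α h0.symm]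
  · have hm := mfact_pos α
    -- AM–GM for `u = α!² |c α|` and `w α`
    rw [le_div_iff₀ two_pos, div_add_div _ _ hpos.ne' (by positivity), le_div_iff₀ (by positivity),
      ← sq_abs (c α)]
    nlinarith [sq_nonneg (mfact α ^ 2 * |c α| - w α)]

theorem scaled_function_xi_derivative_general
    (d : ℕ)
    (w : (Fin d → ℕ) → ℝ) (hw : ∀ α, 0 ≤ w α)
    (hwsum : Summable fun α : Fin d → ℕ => w α / mfact α ^ 2)
    (c : (Fin d → ℕ) → ℝ) (hc : memH w c)
    (ξ : Fin d → ℝ) (hξ : ∀ j, ξ j ∈ Set.Icc (0:ℝ) 1)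
    (i : Fin d) (hξi : ξ i < 1) :
    memH w (Dscale i ξ c) ∧
      ∀ x : Fin d → ℝ, (∀ j, x j ∈ Set.Ioo (-1:ℝ) 1) →
        HasDerivWithinAt
          (fun t : ℝ => ∑' α : Fin d → ℕ,
            c α * t ^ α i * (∏ j ∈ Finset.univ.erase i, ξ j ^ α j) * ∏ j, x j ^ α j)
          (∑' α : Fin d → ℕ, Dscale i ξ c α * ∏ j, x j ^ α j)
          (Set.Ico (0:ℝ) 1) (ξ i) := by
  have hξ_abs : ∀ j, |ξ j| ≤ 1 := fun j => abs_le.2 ⟨by linarith [(hξ j).1], (hξ j).2⟩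
  have hP : ∀ α : Fin d → ℕ, |∏ j ∈ Finset.univ.erase i, ξ j ^ α j| ≤ 1 :=
    fun α => abs_prod_pow_le_one _ α fun j _ => hξ_abs j
  refine ⟨hc.mul_left_of_abs_le (C := (1 - ξ i)⁻¹) hw fun α => ?_, fun x hx => ?_⟩
  · rw [abs_mul, ← mul_one (1 - ξ i)⁻¹]
    exact mul_le_mul (abs_natCast_mul_pow_pred_le hξi (abs_of_nonneg (hξ i).1).le _) (hP α)
      (abs_nonneg _) (inv_nonneg.2 (sub_nonneg.2 hξi.le))
  · have hX : ∀ α : Fin d → ℕ, |∏ j, x j ^ α j| ≤ 1 :=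
      fun α => abs_prod_pow_le_one _ α fun j _ => (abs_lt.2 (hx j)).le
    have ha : Summable fun α : Fin d → ℕ =>
        |c α * (∏ j ∈ Finset.univ.erase i, ξ j ^ α j) * ∏ j, x j ^ α j| := by
      refine (summable_abs_of_memH hw hwsum hc).of_nonneg_of_le (fun α => abs_nonneg _)
        fun α => ?_
      rw [abs_mul, abs_mul, mul_assoc]
      exact mul_le_of_le_one_right (abs_nonneg _) (mul_le_one₀ (hP α) (abs_nonneg _) (hX α))
    simp_rw [fun (t : ℝ) (α : Fin d → ℕ) => show c α * t ^ α i * (∏ j ∈ Finset.univ.erase i,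
      ξ j ^ α j) * ∏ j, x j ^ α j = c α * (∏ j ∈ Finset.univ.erase i, ξ j ^ α j) *
      (∏ j, x j ^ α j) * t ^ α i by ring]
    refine ((hasDerivAt_tsum_mul_pow (fun α => α i) ha ((abs_of_nonneg (hξ i).1).trans_lt hξi)
      ).congr_deriv (tsum_congr fun α => ?_)).hasDerivWithinAt
    simp only [Dscale]
    ring

/-- Equation (5): the ξ_i-derivative of a scaled power-series function belongs to
the native space. For `c ∈ H`, `ξ ∈ [0,1]^d` with `ξ i < 1`: `D_i(ξ)c ∈ H`, and for
every `x ∈ (−1,1)^d` the function `t ↦ ∑_α (c α)·t^{α i}·(∏_{j≠i} (ξ j)^{α j})·x^α`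
on `[0,1)` is differentiable at `t = ξ i` with derivative `∑_α (D_i(ξ)c) α · x^α`. -/
theorem scaled_function_xi_derivative
    (d : ℕ) (hd : 1 ≤ d)
    (w : (Fin d → ℕ) → ℝ) (hw : ∀ α, 0 ≤ w α)
    (hwsum : Summable fun α : Fin d → ℕ => w α / mfact α ^ 2)
    (c : (Fin d → ℕ) → ℝ) (hc : memH w c)
    (ξ : Fin d → ℝ) (hξ : ∀ j, ξ j ∈ Set.Icc (0:ℝ) 1)
    (i : Fin d) (hξi : ξ i < 1) :
    memH w (Dscale i ξ c) ∧
      ∀ x : Fin d → ℝ, (∀ j, x j ∈ Set.Ioo (-1:ℝ) 1) →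
        HasDerivWithinAt
          (fun t : ℝ => ∑' α : Fin d → ℕ,
            c α * t ^ α i * (∏ j ∈ Finset.univ.erase i, ξ j ^ α j) * ∏ j, x j ^ α j)
          (∑' α : Fin d → ℕ, Dscale i ξ c α * ∏ j, x j ^ α j)
          (Set.Ico (0:ℝ) 1) (ξ i) :=
  scaled_function_xi_derivative_general d w hw hwsum c hc ξ hξ i hξi
end
end

section
/- Lemma B.1 (convergence of scaling derivatives under convergence of the estimator). Let f* ∈ H and, on a probability space, let f̂_n be random elements of H with ‖f̂_n − f*‖ → 0 in probability. Then for every ξ ∈ (0,1)^d and every i ∈ Fin d, ‖D_i(ξ) f̂_n − D_i(ξ) f*‖ → 0 in probability. -/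
open MeasureTheory Filter Topology

noncomputable section

/-! The scaling derivative `D_i(ξ)` acts diagonally on coefficients, multiplying the `α`-th one
by `(α i) ξ_i^(α i - 1) ∏_{j ≠ i} ξ_j^(α j) ≤ (α i) ξ_i^(α i - 1) ≤ ∑_{k < α i} ξ_i^k ≤ (1 - ξ_i)⁻¹`.
So `D_i(ξ)` is a bounded linear map of `H` with norm at most `(1 - ξ_i)⁻¹`, and
`‖D_i(ξ) f̂_n - D_i(ξ) f*‖ ≤ (1 - ξ_i)⁻¹ ‖f̂_n - f*‖` transfers convergence in probability. -/

lemma natCast_mul_pow_pred_le_inv_one_sub {t : ℝ} (ht₀ : 0 ≤ t) (ht₁ : t < 1) (n : ℕ) :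
    (n : ℝ) * t ^ (n - 1) ≤ (1 - t)⁻¹ :=
  calc (n : ℝ) * t ^ (n - 1) = ∑ _k ∈ Finset.range n, t ^ (n - 1) := by
        rw [Finset.sum_const, Finset.card_range, nsmul_eq_mul]
    _ ≤ ∑ k ∈ Finset.range n, t ^ k := Finset.sum_le_sum fun k hk =>
        pow_le_pow_of_le_one ht₀ ht₁.le (by have := Finset.mem_range.mp hk; omega)
    _ ≤ (1 - t)⁻¹ := by
        have := geom_sum_Ico_le_of_lt_one (m := 0) (n := n) ht₀ ht₁
        rwa [← Finset.range_eq_Ico, pow_zero, one_div] at this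

section NativeSpace

variable {d : ℕ} {w : (Fin d → ℕ) → ℝ}

lemma innerH_self (c : (Fin d → ℕ) → ℝ) :
    innerH w c c = ∑' α, mfact α ^ 2 * c α ^ 2 / w α := by
  simp only [innerH, mul_assoc, sq]

lemma memH.sub (hw : ∀ α, 0 ≤ w α) {a b : (Fin d → ℕ) → ℝ} (ha : memH w a) (hb : memH w b) :
    memH w (a - b) := by
  refine ⟨fun α hα => by simp [ha.1 α hα, hb.1 α hα], ?_⟩
  refine .of_nonneg_of_le (fun α => div_nonneg (by positivity) (hw α)) (fun α => ?_)
    ((ha.2.mul_left 2).add (hb.2.mul_left 2))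
  have hsq : (a α - b α) ^ 2 ≤ 2 * a α ^ 2 + 2 * b α ^ 2 := by
    nlinarith [sq_nonneg (a α + b α)]
  calc mfact α ^ 2 * (a - b) α ^ 2 / w α
      ≤ mfact α ^ 2 * (2 * a α ^ 2 + 2 * b α ^ 2) / w α := by
        gcongr; exacts [hw α, hsq]
    _ = _ := by ring

lemma normH_mul_le (hw : ∀ α, 0 ≤ w α) {c m : (Fin d → ℕ) → ℝ}
    (hc : Summable fun α => mfact α ^ 2 * c α ^ 2 / w α) {M : ℝ} (hm : ∀ α, |m α| ≤ M) :
    normH w (m * c) ≤ M * normH w c := by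
  have hM : 0 ≤ M := (abs_nonneg _).trans (hm 0)
  have hterm : ∀ α, mfact α ^ 2 * (m * c) α ^ 2 / w α
      = m α ^ 2 * (mfact α ^ 2 * c α ^ 2 / w α) := fun α => by simp only [Pi.mul_apply]; ring
  have hle : ∀ α, m α ^ 2 * (mfact α ^ 2 * c α ^ 2 / w α)
      ≤ M ^ 2 * (mfact α ^ 2 * c α ^ 2 / w α) := fun α =>
    mul_le_mul_of_nonneg_right (sq_le_sq' (abs_le.mp (hm α)).1 (abs_le.mp (hm α)).2)
      (div_nonneg (by positivity) (hw α))
  have hinner : innerH w (m * c) (m * c) ≤ M ^ 2 * innerH w c c := by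
    rw [innerH_self, innerH_self, ← tsum_mul_left]
    simp only [hterm]
    exact Summable.tsum_le_tsum hle
      (.of_nonneg_of_le (fun α => mul_nonneg (sq_nonneg _) (div_nonneg (by positivity) (hw α)))
        hle (hc.mul_left _))
      (hc.mul_left _)
  calc normH w (m * c) ≤ Real.sqrt (M ^ 2 * innerH w c c) := Real.sqrt_le_sqrt hinner
    _ = M * normH w c := by rw [Real.sqrt_mul (sq_nonneg M), Real.sqrt_sq hM, normH]

end NativeSpace

section ScalingDerivative

variable {d : ℕ} (i : Fin d)

lemma Dscale_eq_mul (ξ : Fin d → ℝ) (c : (Fin d → ℕ) → ℝ) : Dscale i ξ c = Dscale i ξ 1 * c := by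
  ext α; simp [Dscale]

lemma Dscale_sub (ξ : Fin d → ℝ) (c c' : (Fin d → ℕ) → ℝ) :
    Dscale i ξ c - Dscale i ξ c' = Dscale i ξ (c - c') := by
  ext α; simp only [Dscale, Pi.sub_apply]; ring

lemma abs_Dscale_one_le {ξ : Fin d → ℝ} (hξ : ∀ j, ξ j ∈ Set.Icc (0 : ℝ) 1) (hξi : ξ i < 1)
    (α : Fin d → ℕ) : |Dscale i ξ 1 α| ≤ (1 - ξ i)⁻¹ := by
  have hprod₀ : 0 ≤ ∏ j ∈ Finset.univ.erase i, ξ j ^ α j :=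
    Finset.prod_nonneg fun j _ => pow_nonneg (hξ j).1 _
  have hprod₁ : ∏ j ∈ Finset.univ.erase i, ξ j ^ α j ≤ 1 :=
    Finset.prod_le_one (fun j _ => pow_nonneg (hξ j).1 _)
      (fun j _ => pow_le_one₀ (hξ j).1 (hξ j).2)
  have hlead₀ : 0 ≤ (α i : ℝ) * ξ i ^ (α i - 1) :=
    mul_nonneg (by positivity) (pow_nonneg (hξ i).1 _)
  simp only [Dscale, Pi.one_apply, mul_one]
  rw [abs_of_nonneg (mul_nonneg hlead₀ hprod₀)]
  calc (α i : ℝ) * ξ i ^ (α i - 1) * ∏ j ∈ Finset.univ.erase i, ξ j ^ α j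
      ≤ (α i : ℝ) * ξ i ^ (α i - 1) := mul_le_of_le_one_right hlead₀ hprod₁
    _ ≤ (1 - ξ i)⁻¹ := natCast_mul_pow_pred_le_inv_one_sub (hξ i).1 hξi _

lemma normH_Dscale_le {w : (Fin d → ℕ) → ℝ} (hw : ∀ α, 0 ≤ w α) {ξ : Fin d → ℝ} (hξ : ∀ j, ξ j ∈ Set.Icc (0 : ℝ) 1)
    (hξi : ξ i < 1) {c : (Fin d → ℕ) → ℝ} (hc : memH w c) :
    normH w (Dscale i ξ c) ≤ (1 - ξ i)⁻¹ * normH w c := by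
  rw [Dscale_eq_mul]
  exact normH_mul_le hw hc.2 (abs_Dscale_one_le i hξ hξi)

end ScalingDerivative

lemma tendsto_measure_le_of_le_mul {ι Ω : Type*} [MeasurableSpace Ω] {μ : Measure Ω}
    {l : Filter ι} {f g : ι → Ω → ℝ} {M : ℝ} (hM : 0 < M) (hfg : ∀ n ω, f n ω ≤ M * g n ω)
    (hg : ∀ ε : ℝ, 0 < ε → Tendsto (fun n => μ {ω | ε ≤ g n ω}) l (𝓝 0))
    {ε : ℝ} (hε : 0 < ε) : Tendsto (fun n => μ {ω | ε ≤ f n ω}) l (𝓝 0) := by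
  refine tendsto_of_tendsto_of_tendsto_of_le_of_le tendsto_const_nhds (hg (ε / M) (by positivity))
    (fun _ => zero_le) fun n => measure_mono fun ω (hω : ε ≤ f n ω) => ?_
  change ε / M ≤ g n ω
  rw [div_le_iff₀' hM]
  exact hω.trans (hfg n ω)

theorem scaling_derivative_convergence_in_probability_general
    (d : ℕ)
    (w : (Fin d → ℕ) → ℝ) (hw : ∀ α, 0 ≤ w α)
    (Ω : Type*) [MeasurableSpace Ω] (P : Measure Ω)
    (fstar : (Fin d → ℕ) → ℝ) (hfstar : memH w fstar)
    (fhat : ℕ → Ω → (Fin d → ℕ) → ℝ) (hfhat : ∀ n ω, memH w (fhat n ω))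
    (hconv : ∀ ε : ℝ, 0 < ε →
      Tendsto (fun n => P {ω | ε ≤ normH w (fhat n ω - fstar)}) atTop (𝓝 0)) :
    ∀ ξ : Fin d → ℝ, (∀ j, ξ j ∈ Set.Ioo (0:ℝ) 1) → ∀ i : Fin d, ∀ ε : ℝ, 0 < ε →
      Tendsto (fun n => P {ω | ε ≤ normH w (Dscale i ξ (fhat n ω) - Dscale i ξ fstar)})
        atTop (𝓝 0) := by
  intro ξ hξ i ε hε
  have hξi : ξ i < 1 := (hξ i).2
  refine tendsto_measure_le_of_le_mul (inv_pos.mpr (sub_pos.mpr hξi)) (fun n ω => ?_) hconv hε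
  rw [Dscale_sub]
  exact normH_Dscale_le i hw (fun j => Set.Ioo_subset_Icc_self (hξ j)) hξi
    ((hfhat n ω).sub hw hfstar)

/-- Lemma B.1: if `‖f̂_n − f*‖ → 0` in probability, then for every `ξ ∈ (0,1)^d` and
every coordinate `i`, `‖D_i(ξ) f̂_n − D_i(ξ) f*‖ → 0` in probability. -/
theorem scaling_derivative_convergence_in_probability
    (d : ℕ) (hd : 1 ≤ d)
    (w : (Fin d → ℕ) → ℝ) (hw : ∀ α, 0 ≤ w α)
    (hwsum : Summable fun α : Fin d → ℕ => w α / mfact α ^ 2)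
    (Ω : Type*) [MeasurableSpace Ω] (P : Measure Ω) [IsProbabilityMeasure P]
    (fstar : (Fin d → ℕ) → ℝ) (hfstar : memH w fstar)
    (fhat : ℕ → Ω → (Fin d → ℕ) → ℝ) (hfhat : ∀ n ω, memH w (fhat n ω))
    (hconv : ∀ ε : ℝ, 0 < ε →
      Tendsto (fun n => P {ω | ε ≤ normH w (fhat n ω - fstar)}) atTop (𝓝 0)) :
    ∀ ξ : Fin d → ℝ, (∀ j, ξ j ∈ Set.Ioo (0:ℝ) 1) → ∀ i : Fin d, ∀ ε : ℝ, 0 < ε →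
      Tendsto (fun n => P {ω | ε ≤ normH w (Dscale i ξ (fhat n ω) - Dscale i ξ fstar)})
        atTop (𝓝 0) :=
  scaling_derivative_convergence_in_probability_general d w hw Ω P fstar hfstar fhat hfhat hconv
end
end
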